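/- arXiv:math/0301338 — 2 statements merged into one kernel-verified Lean document; each statement's English description precedes it below -/
import Mathlib

section
/- Let n ≥ 2 and let x_1, …, x_n and u_1, …, u_n be unit vectors in a real inner product space (e.g. ℝ³). Suppose there exist real numbers λ_1, …, λ_{n−1} > 0 such that x_i − x_{i+1} = λ_i (u_i + u_{i+1}) for every i = 1, …, n−1, and suppose there exist a unit vector v and a real number η > 0 such that ⟨u_i, v⟩ ≥ η for all i = 1, …, n. Let ξ_i denote the angle between the vectors x_i and x_{i+1}, and assume ξ_i < π for each i = 1, …, n−1. Then Σ_{i=1}^{n−1} ξ_i < π/η. -/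
open scoped RealInnerProductSpace
open Real

/-!
Each chord `x i - x (i + 1) = λ i • (u i + u (i + 1))` lies in the cone
`{w | η * ‖w‖ ≤ ⟪w, v⟫}`, so `η` times the total chord length is at most the telescoped
`⟪x 1 - x n, v⟫ ≤ 2`. For unit vectors the chord is `2 sin (ξ / 2)`, which by Jordan's
inequality is at least `2 ξ / π`, strictly when `0 < ξ < π`; hence `∑ ξ < π / η`.
-/

open InnerProductGeometry Finset

section

variable {E : Type*} [NormedAddCommGroup E] [InnerProductSpace ℝ E]

theorem norm_sub_eq_two_mul_sin_half_angle {x y : E} (hx : ‖x‖ = 1) (hy : ‖y‖ = 1) :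
    ‖x - y‖ = 2 * sin (angle x y / 2) := by
  rw [sin_half_eq_sqrt (angle_nonneg x y) (by linarith [angle_le_pi x y, pi_pos]),
    ← sqrt_sq (norm_nonneg (x - y)), sq,
    norm_sub_sq_eq_norm_sq_add_norm_sq_sub_two_mul_norm_mul_norm_mul_cos_angle, hx, hy,
    show (1 * 1 + 1 * 1 - 2 * 1 * 1 * cos (angle x y) : ℝ) = 2 ^ 2 * ((1 - cos (angle x y)) / 2)
      by ring, sqrt_mul (by norm_num), sqrt_sq zero_le_two]

theorem two_div_pi_mul_angle_le_norm_sub {x y : E} (hx : ‖x‖ = 1) (hy : ‖y‖ = 1) :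
    2 / π * angle x y ≤ ‖x - y‖ := by
  have h := mul_le_sin (div_nonneg (angle_nonneg x y) zero_le_two)
    (div_le_div_of_nonneg_right (angle_le_pi x y) zero_le_two)
  rw [norm_sub_eq_two_mul_sin_half_angle hx hy]
  linarith

theorem two_div_pi_mul_angle_lt_norm_sub {x y : E} (hx : ‖x‖ = 1) (hy : ‖y‖ = 1)
    (h₀ : 0 < angle x y) (hπ : angle x y < π) : 2 / π * angle x y < ‖x - y‖ := by
  have h := mul_lt_sin (half_pos h₀) (div_lt_div_of_pos_right hπ zero_lt_two)
  rw [norm_sub_eq_two_mul_sin_half_angle hx hy]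
  linarith

theorem mul_norm_smul_add_le_inner {a b v : E} {η c : ℝ} (hη : 0 ≤ η) (hc : 0 ≤ c)
    (ha : ‖a‖ ≤ 1) (hb : ‖b‖ ≤ 1) (hav : η ≤ ⟪a, v⟫) (hbv : η ≤ ⟪b, v⟫) :
    η * ‖c • (a + b)‖ ≤ ⟪c • (a + b), v⟫ := by
  rw [norm_smul, norm_of_nonneg hc, real_inner_smul_left, inner_add_left]
  have hab : ‖a + b‖ ≤ 2 := (norm_add_le a b).trans (by linarith)
  calc η * (c * ‖a + b‖) ≤ η * (c * 2) := by gcongr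
    _ ≤ c * (⟪a, v⟫ + ⟪b, v⟫) := by nlinarith

theorem sum_Ico_inner_sub_succ (x : ℕ → E) (v : E) {m n : ℕ} (hmn : m ≤ n) :
    ∑ i ∈ Ico m n, ⟪x i - x (i + 1), v⟫ = ⟪x m - x n, v⟫ := by
  rw [← sum_inner, ← neg_sub (x n), ← sum_Ico_sub x hmn, ← sum_neg_distrib]
  simp only [neg_sub]

theorem mul_sum_norm_sub_succ_le_two {x : ℕ → E} {v : E} {η : ℝ} {m n : ℕ} (hmn : m ≤ n)
    (hm : ‖x m‖ ≤ 1) (hn : ‖x n‖ ≤ 1) (hv : ‖v‖ ≤ 1)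
    (hcone : ∀ i ∈ Ico m n, η * ‖x i - x (i + 1)‖ ≤ ⟪x i - x (i + 1), v⟫) :
    η * ∑ i ∈ Ico m n, ‖x i - x (i + 1)‖ ≤ 2 :=
  calc η * ∑ i ∈ Ico m n, ‖x i - x (i + 1)‖
      ≤ ∑ i ∈ Ico m n, ⟪x i - x (i + 1), v⟫ := by rw [mul_sum]; exact sum_le_sum hcone
    _ = ⟪x m - x n, v⟫ := sum_Ico_inner_sub_succ x v hmn
    _ ≤ ‖x m - x n‖ * ‖v‖ := real_inner_le_norm _ _
    _ ≤ (‖x m‖ + ‖x n‖) * 1 := by gcongr; exact norm_sub_le _ _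
    _ ≤ 2 := by linarith

end

/-- **Lemma 1 (Bárány–Kuperberg–Zamfirescu).**
Let `x 1, …, x n` and `u 1, …, u n` be unit vectors in a real inner product space such
that `x i − x (i+1) = λ i • (u i + u (i+1))` with `λ i > 0` for `i = 1, …, n−1`.
If there is a unit vector `v` with `⟪u i, v⟫ ≥ η > 0` for all `i`, and each angle
`ξ i` between `x i` and `x (i+1)` is less than `π`, then `∑ ξ i < π / η`. -/
theorem sum_angles_lt_pi_div_eta
    {E : Type*} [NormedAddCommGroup E] [InnerProductSpace ℝ E]
    (n : ℕ) (hn : 2 ≤ n) (x u : ℕ → E)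
    (hx : ∀ i ∈ Finset.Icc 1 n, ‖x i‖ = 1)
    (hu : ∀ i ∈ Finset.Icc 1 n, ‖u i‖ = 1)
    (lam : ℕ → ℝ)
    (hlam : ∀ i ∈ Finset.Icc 1 (n - 1), 0 < lam i)
    (hrel : ∀ i ∈ Finset.Icc 1 (n - 1), x i - x (i + 1) = lam i • (u i + u (i + 1)))
    (v : E) (hv : ‖v‖ = 1) (η : ℝ) (hη : 0 < η)
    (huv : ∀ i ∈ Finset.Icc 1 n, η ≤ ⟪u i, v⟫)
    (hξ : ∀ i ∈ Finset.Icc 1 (n - 1), InnerProductGeometry.angle (x i) (x (i + 1)) < π) :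
    ∑ i ∈ Finset.Icc 1 (n - 1), InnerProductGeometry.angle (x i) (x (i + 1)) < π / η := by
  have hS : Icc 1 (n - 1) = Ico 1 n := by ext i; simp only [mem_Icc, mem_Ico]; omega
  have hends : ∀ i ∈ Ico 1 n, i ∈ Icc 1 n ∧ i + 1 ∈ Icc 1 n := by
    intro i; simp only [mem_Icc, mem_Ico]; omega
  rw [hS] at hlam hrel hξ ⊢
  have hlength : η * ∑ i ∈ Ico 1 n, ‖x i - x (i + 1)‖ ≤ 2 := by
    refine mul_sum_norm_sub_succ_le_two (by omega) (hx 1 (mem_Icc.mpr ⟨le_rfl, by omega⟩)).le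
      (hx n (mem_Icc.mpr ⟨by omega, le_rfl⟩)).le hv.le fun i hi => ?_
    obtain ⟨hi₁, hi₂⟩ := hends i hi
    rw [hrel i hi]
    exact mul_norm_smul_add_le_inner hη.le (hlam i hi).le (hu i hi₁).le (hu _ hi₂).le
      (huv i hi₁) (huv _ hi₂)
  by_cases hzero : ∀ i ∈ Ico 1 n, angle (x i) (x (i + 1)) = 0
  · rw [sum_eq_zero hzero]; positivity
  obtain ⟨j, hj, hne⟩ := not_forall₂.mp hzero
  have hjordan : 2 / π * ∑ i ∈ Ico 1 n, angle (x i) (x (i + 1)) <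
      ∑ i ∈ Ico 1 n, ‖x i - x (i + 1)‖ := by
    rw [mul_sum]
    refine sum_lt_sum (fun i hi => two_div_pi_mul_angle_le_norm_sub (hx i (hends i hi).1)
      (hx _ (hends i hi).2)) ⟨j, hj, ?_⟩
    exact two_div_pi_mul_angle_lt_norm_sub (hx j (hends j hj).1) (hx _ (hends j hj).2)
      ((angle_nonneg _ _).lt_of_ne' hne) (hξ j hj)
  rw [lt_div_iff₀ hη]
  calc (∑ i ∈ Ico 1 n, angle (x i) (x (i + 1))) * η
      = π / 2 * (η * (2 / π * ∑ i ∈ Ico 1 n, angle (x i) (x (i + 1)))) := by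
        field_simp
    _ < π / 2 * (η * ∑ i ∈ Ico 1 n, ‖x i - x (i + 1)‖) := by gcongr
    _ ≤ π / 2 * 2 := by gcongr
    _ = π := by ring
end

section
/- Let E be a real inner product space, let r > 0, and let u, v, f, g ∈ E and λ ∈ ℝ satisfy: λ ≥ 0, ‖u‖ = 1, f = λ·v + g, ‖g‖ ≤ r/2, ‖f‖ < 1, and ⟨u, f⟩ ≥ r. Then ⟨u, v⟩ > (r/2)·‖v‖. -/
set_option maxHeartbeats 1000000

open scoped RealInnerProductSpace

private lemma pyth_aux {E : Type*} [NormedAddCommGroup E] [InnerProductSpace ℝ E]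
    (u x : E) (hu : ‖u‖ = 1) :
    ‖x - ⟪u, x⟫ • u‖ ^ 2 = ‖x‖ ^ 2 - ⟪u, x⟫ ^ 2 := by
  rw [norm_sub_sq_real, real_inner_smul_right, norm_smul, real_inner_comm x u, hu]
  simp [mul_pow, sq_abs]
  ring

private lemma scalar_aux (s a b p q N P : ℝ) (hs0 : 0 < s)
    (hp0 : 0 ≤ p) (hq0 : 0 ≤ q) (hN0 : 0 ≤ N) (hP0 : 0 ≤ P)
    (hap2 : a ^ 2 + p ^ 2 < 1) (hbq2 : b ^ 2 + q ^ 2 ≤ s ^ 2)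
    (har : 2 * s ≤ a) (hbs : b ≤ s)
    (hNP : N ^ 2 = (a - b) ^ 2 + P ^ 2) (hPpq : P ≤ p + q) :
    s * N < a - b := by
  have ha1 : a < 1 := by nlinarith [sq_nonneg p]
  have hs12 : s < 1 / 2 := by linarith
  have hab : s ≤ a - b := by linarith
  set c : ℝ := Real.sqrt (1 - s ^ 2) with hc
  have hc2 : c ^ 2 = 1 - s ^ 2 := Real.sq_sqrt (by nlinarith)
  have hc0 : 0 < c := Real.sqrt_pos.mpr (by nlinarith)
  have hc1 : c ≤ 1 := by nlinarith [hc2]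
  have hc12 : 1 / 2 < c := by nlinarith [hc2, hc0]
  clear_value c
  have hA : c * b + s * q ≤ s := by
    nlinarith [sq_nonneg (c * q - s * b), sq_nonneg (c * b + s * q - s),
      sq_nonneg (c * b + s * q + s)]
  have hB : s < c * a - s * p := by
    have h2 : 0 < c * a - s := by
      nlinarith [mul_nonneg (show (0:ℝ) ≤ a - 2 * s by linarith) hc0.le]
    have h25 : 0 ≤ a - 2 * c * s := by
      nlinarith [mul_nonneg hs0.le (show (0:ℝ) ≤ 1 - c by linarith)]
    have hA2 : s ^ 2 * (1 - a ^ 2) ≤ (c * a - s) ^ 2 := by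
      nlinarith [mul_nonneg (show (0:ℝ) ≤ a by linarith) h25, hc2]
    have h3 : s ^ 2 * p ^ 2 < (c * a - s) ^ 2 := by
      nlinarith [mul_lt_mul_of_pos_left (show p ^ 2 < 1 - a ^ 2 by linarith)
        (show (0:ℝ) < s ^ 2 by positivity)]
    nlinarith [h3, h2, mul_nonneg hs0.le hp0]
  have hkey : s * (p + q) < c * (a - b) := by linarith [hA, hB]
  have hP2 : P ^ 2 ≤ (p + q) ^ 2 := by nlinarith
  have hsp : 0 ≤ s * (p + q) := by positivity
  have h5 : (s * (p + q)) ^ 2 < (c * (a - b)) ^ 2 := by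
    apply pow_lt_pow_left₀ hkey hsp; norm_num
  have h4 : (s * N) ^ 2 < (a - b) ^ 2 := by nlinarith [hc2]
  exact lt_of_pow_lt_pow_left₀ 2 (by linarith) h4

/-- **Shadow claim (Bárány–Kuperberg–Zamfirescu).**
If `u` is a unit vector, `λ ≥ 0`, `f = λ • v + g` with `‖g‖ ≤ r/2`, `‖f‖ < 1`
and `⟪u, f⟫ ≥ r`, then `⟪u, v⟫ > (r/2) * ‖v‖`. -/
theorem inner_gt_half_r_mul_norm
    {E : Type*} [NormedAddCommGroup E] [InnerProductSpace ℝ E]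
    (r : ℝ) (hr : 0 < r) (u v f g : E) (lam : ℝ)
    (hlam : 0 ≤ lam) (hu : ‖u‖ = 1) (hf : f = lam • v + g)
    (hg : ‖g‖ ≤ r / 2) (hf1 : ‖f‖ < 1) (huf : r ≤ ⟪u, f⟫) :
    r / 2 * ‖v‖ < ⟪u, v⟫ := by
  have hs0 : 0 < r / 2 := by positivity
  have hpyf := pyth_aux u f hu
  have hpyg := pyth_aux u g hu
  have haf : ⟪u, f⟫ ≤ ‖f‖ := by
    calc ⟪u, f⟫ ≤ ‖u‖ * ‖f‖ := real_inner_le_norm u f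
    _ = ‖f‖ := by rw [hu, one_mul]
  have hbg : ⟪u, g⟫ ≤ ‖g‖ := by
    calc ⟪u, g⟫ ≤ ‖u‖ * ‖g‖ := real_inner_le_norm u g
    _ = ‖g‖ := by rw [hu, one_mul]
  have huv : ⟪u, f - g⟫ = ⟪u, f⟫ - ⟪u, g⟫ := inner_sub_right u f g
  have hPy : ‖(f - g) - ⟪u, f - g⟫ • u‖ ^ 2 = ‖f - g‖ ^ 2 - ⟪u, f - g⟫ ^ 2 :=
    pyth_aux u (f - g) hu
  have htri : ‖(f - g) - ⟪u, f - g⟫ • u‖ ≤ ‖f - ⟪u, f⟫ • u‖ + ‖g - ⟪u, g⟫ • u‖ := by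
    have h : (f - g) - ⟪u, f - g⟫ • u = (f - ⟪u, f⟫ • u) - (g - ⟪u, g⟫ • u) := by
      rw [huv, sub_smul]; abel
    rw [h]
    exact norm_sub_le _ _
  -- feed into the scalar lemma
  have hap2 : ⟪u, f⟫ ^ 2 + ‖f - ⟪u, f⟫ • u‖ ^ 2 < 1 := by
    nlinarith [norm_nonneg f, hf1, hpyf]
  have hbq2 : ⟪u, g⟫ ^ 2 + ‖g - ⟪u, g⟫ • u‖ ^ 2 ≤ (r / 2) ^ 2 := by
    nlinarith [norm_nonneg g, hg, hpyg]
  have hmain : r / 2 * ‖f - g‖ < ⟪u, f⟫ - ⟪u, g⟫ := by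
    apply scalar_aux (r / 2) ⟪u, f⟫ ⟪u, g⟫ ‖f - ⟪u, f⟫ • u‖ ‖g - ⟪u, g⟫ • u‖
        ‖f - g‖ ‖(f - g) - ⟪u, f - g⟫ • u‖ hs0 (norm_nonneg _) (norm_nonneg _)
        (norm_nonneg _) (norm_nonneg _) hap2 hbq2 (by linarith) (le_trans hbg hg)
        _ htri
    rw [hPy, huv]; ring
  -- f - g = lam • v
  have hfg : f - g = lam • v := by rw [hf]; abel
  have hlam0 : 0 < lam := by
    rcases hlam.lt_or_eq with h | h
    · exact h
    · exfalso
      have hfeq : f = g := by rw [hf, ← h, zero_smul, zero_add]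
      rw [hfeq] at huf
      have := le_trans huf (le_trans hbg hg)
      linarith
  have h6 : ‖f - g‖ = lam * ‖v‖ := by
    rw [hfg, norm_smul, Real.norm_eq_abs, abs_of_nonneg hlam]
  have h7 : ⟪u, f⟫ - ⟪u, g⟫ = lam * ⟪u, v⟫ := by
    rw [← huv, hfg, real_inner_smul_right]
  rw [h6, h7] at hmain
  have := (mul_lt_mul_iff_right₀ hlam0).mp (by linarith : lam * (r / 2 * ‖v‖) < lam * ⟪u, v⟫)
  linarith
end
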